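/- If $\beta_{j,1}$, for $j=2,\dots,N$, are independent Beta random variables with parameters $(j,1)$, then the product $\prod_{j=2}^N \beta_{j,1}$ has the Beta distribution with parameters $(2, N-1)$. -/

import Mathlib

/-! Adding the factors one at a time, it suffices that `UV ∼ Beta(2, k + 1)` for independent
`U ∼ Beta(2, k)` and `V ∼ Beta(k + 2, 1)`. We compare survival functions: on `[0, 1]`,
`P(U > s) = (1 - s)^k (1 + k s)`, and `V` has density `(k + 2) y^(k+1)`, so for `0 < t < 1`
  `P(UV > t) = ∫_t^1 (k + 2) y^(k+1) P(U > t / y) dy = ∫_t^1 (k + 2) (y - t)^k (y + k t) dy`,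
which is `(1 - t)^(k+1) (1 + (k + 1) t)`. -/

open MeasureTheory ProbabilityTheory

/-- The Beta distribution with parameters `a, b`. -/
noncomputable def betaM (a b : ℝ) : Measure ℝ :=
  volume.withDensity fun x =>
    ENNReal.ofReal ((Set.Ioo (0 : ℝ) 1).indicator
      (fun x => (Real.Gamma (a + b) / (Real.Gamma a * Real.Gamma b)) *
        x ^ (a - 1) * (1 - x) ^ (b - 1)) x)

open Set

lemma MeasureTheory.Measure.ext_of_Ioi {α : Type*} [TopologicalSpace α] {_ : MeasurableSpace α}
    [SecondCountableTopology α] [LinearOrder α] [OrderTopology α] [BorelSpace α]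
    (μ ν : Measure α) [IsProbabilityMeasure μ] [IsProbabilityMeasure ν]
    (h : ∀ a, μ (Ioi a) = ν (Ioi a)) : μ = ν :=
  Measure.ext_of_Iic μ ν fun a => by
    rw [← compl_Ioi, prob_compl_eq_one_sub measurableSet_Ioi,
      prob_compl_eq_one_sub measurableSet_Ioi, h]

lemma lintegral_Ioo_ofReal_eq_sub {a b : ℝ} (hab : a ≤ b) {f F : ℝ → ℝ}
    (hF : ∀ x, HasDerivAt F (f x) x) (hf : Continuous f) (hf0 : ∀ x ∈ Ioo a b, 0 ≤ f x) :
    ∫⁻ x in Ioo a b, ENNReal.ofReal (f x) = ENNReal.ofReal (F b - F a) := by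
  rw [← ofReal_integral_eq_lintegral_ofReal (hf.integrableOn_Icc.mono_set Ioo_subset_Icc_self)
    (ae_restrict_of_forall_mem measurableSet_Ioo hf0), ← integral_Ioc_eq_integral_Ioo,
    ← intervalIntegral.integral_of_le hab,
    intervalIntegral.integral_eq_sub_of_hasDerivAt (fun x _ => hF x) (hf.intervalIntegrable a b)]

lemma Ioi_inter_Ioo_eq_Ioo_projIcc (t : ℝ) :
    Ioi t ∩ Ioo 0 1 = Ioo (projIcc (0 : ℝ) 1 zero_le_one t : ℝ) 1 := by
  ext x
  simp only [coe_projIcc, mem_inter_iff, mem_Ioi, mem_Ioo, max_lt_iff, min_lt_iff]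
  grind

noncomputable def unitIntervalWithDensity (f : ℝ → ℝ) : Measure ℝ :=
  volume.withDensity fun x => ENNReal.ofReal ((Ioo 0 1).indicator f x)

lemma unitIntervalWithDensity_eq_withDensity (f : ℝ → ℝ) :
    unitIntervalWithDensity f =
      (volume.restrict (Ioo 0 1)).withDensity fun x => ENNReal.ofReal (f x) := by
  rw [unitIntervalWithDensity, ← withDensity_indicator measurableSet_Ioo]
  exact congrArg _ (indicator_comp_of_zero ENNReal.ofReal_zero).symm

lemma unitIntervalWithDensity_apply (f : ℝ → ℝ) {s : Set ℝ} (hs : MeasurableSet s) :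
    unitIntervalWithDensity f s = ∫⁻ x in s ∩ Ioo 0 1, ENNReal.ofReal (f x) := by
  rw [unitIntervalWithDensity_eq_withDensity, withDensity_apply _ hs,
    Measure.restrict_restrict hs]

lemma lintegral_unitIntervalWithDensity {f : ℝ → ℝ} (hf : Measurable f) (g : ℝ → ENNReal) :
    ∫⁻ x, g x ∂unitIntervalWithDensity f =
      ∫⁻ x in Ioo 0 1, ENNReal.ofReal (f x) * g x := by
  rw [unitIntervalWithDensity_eq_withDensity,
    lintegral_withDensity_eq_lintegral_mul_non_measurable _ hf.ennreal_ofReal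
      (ae_of_all _ fun _ => ENNReal.ofReal_lt_top)]
  rfl

lemma unitIntervalWithDensity_Ioi {f F : ℝ → ℝ} (hF : ∀ x, HasDerivAt F (f x) x)
    (hf : Continuous f) (hf0 : ∀ x ∈ Ioo 0 1, 0 ≤ f x) (t : ℝ) :
    unitIntervalWithDensity f (Ioi t) = ENNReal.ofReal (F 1 - F (projIcc 0 1 zero_le_one t)) := by
  have hp := (projIcc (0 : ℝ) 1 zero_le_one t).2
  rw [unitIntervalWithDensity_apply f measurableSet_Ioi, Ioi_inter_Ioo_eq_Ioo_projIcc,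
    lintegral_Ioo_ofReal_eq_sub hp.2 hF hf fun x hx => hf0 x ⟨hp.1.trans_lt hx.1, hx.2⟩]

lemma betaM_eq_unitIntervalWithDensity {a b : ℝ} {f : ℝ → ℝ}
    (hf : EqOn (fun x => Real.Gamma (a + b) / (Real.Gamma a * Real.Gamma b) *
      x ^ (a - 1) * (1 - x) ^ (b - 1)) f (Ioo 0 1)) :
    betaM a b = unitIntervalWithDensity f := by
  rw [betaM, unitIntervalWithDensity, indicator_congr hf]

lemma betaM_eq_betaMeasure (a b : ℝ) : betaM a b = betaMeasure a b := by
  refine congrArg volume.withDensity (funext fun x => ?_)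
  simp only [betaPDF, betaPDFReal, beta, one_div_div, indicator_apply, mem_Ioo]

lemma isProbabilityMeasure_betaM {a b : ℝ} (ha : 0 < a) (hb : 0 < b) :
    IsProbabilityMeasure (betaM a b) :=
  betaM_eq_betaMeasure a b ▸ isProbabilityMeasureBeta ha hb

open Nat in
lemma betaM_natCast_add_one (a b : ℕ) :
    betaM (a + 1) (b + 1) = unitIntervalWithDensity fun x =>
      ((a + b + 1)! / (a ! * b !) : ℝ) * x ^ a * (1 - x) ^ b := by
  refine betaM_eq_unitIntervalWithDensity fun x _ => ?_
  have h : (a : ℝ) + 1 + (b + 1) = ((a + b + 1 : ℕ) : ℝ) + 1 := by push_cast; ring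
  simp only [h, Real.Gamma_nat_eq_factorial, add_sub_cancel_right, Real.rpow_natCast]

lemma betaM_two_natCast_add_one (m : ℕ) :
    betaM 2 (m + 1) = unitIntervalWithDensity fun x => (m + 1) * (m + 2) * x * (1 - x) ^ m := by
  have h := betaM_natCast_add_one 1 m
  rw [Nat.cast_one, one_add_one_eq_two] at h
  rw [h]
  congr 1
  funext x
  rw [show 1 + m + 1 = m + 1 + 1 by ring, Nat.factorial_succ, Nat.factorial_succ]
  push_cast
  field_simp
  ring

lemma betaM_natCast_add_two_one (k : ℕ) :
    betaM (k + 2) 1 = unitIntervalWithDensity fun y => (k + 2) * y ^ (k + 1) := by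
  have h := betaM_natCast_add_one (k + 1) 0
  rw [show ((k + 1 : ℕ) : ℝ) + 1 = k + 2 by push_cast; ring, Nat.cast_zero, zero_add] at h
  rw [h]
  congr 1
  funext y
  rw [add_zero, Nat.factorial_succ (k + 1), Nat.factorial_zero]
  push_cast
  field_simp
  ring

noncomputable def betaTwoSurvival (k : ℕ) (x : ℝ) : ℝ := (1 - x) ^ k * (1 + k * x)

lemma betaTwoSurvival_zero (k : ℕ) : betaTwoSurvival k 0 = 1 := by
  simp [betaTwoSurvival]

lemma betaTwoSurvival_one {k : ℕ} (hk : 1 ≤ k) : betaTwoSurvival k 1 = 0 := by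
  simp [betaTwoSurvival, zero_pow (Nat.one_le_iff_ne_zero.1 hk)]

lemma hasDerivAt_neg_betaTwoSurvival (m : ℕ) (x : ℝ) :
    HasDerivAt (fun x => -betaTwoSurvival (m + 1) x) ((m + 1) * (m + 2) * x * (1 - x) ^ m) x := by
  have h := ((((hasDerivAt_id' x).const_sub 1).pow (m + 1)).mul
    (((hasDerivAt_id' x).const_mul ((m + 1 : ℕ) : ℝ)).const_add 1)).neg
  apply h.congr_deriv
  rw [Nat.add_sub_cancel, Pi.pow_apply, pow_succ]
  push_cast
  ring

lemma betaM_two_Ioi {k : ℕ} (hk : 1 ≤ k) (t : ℝ) :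
    betaM 2 k (Ioi t) = ENNReal.ofReal (betaTwoSurvival k (projIcc 0 1 zero_le_one t)) := by
  obtain ⟨m, rfl⟩ := Nat.exists_eq_add_of_le' hk
  rw [Nat.cast_succ, betaM_two_natCast_add_one,
    unitIntervalWithDensity_Ioi (hasDerivAt_neg_betaTwoSurvival m) (by fun_prop)
      fun x hx => by have := hx.2; have := hx.1; positivity]
  simp [betaTwoSurvival]

lemma pow_mul_betaTwoSurvival_div (k : ℕ) (t : ℝ) {y : ℝ} (hy : y ≠ 0) :
    y ^ (k + 1) * betaTwoSurvival k (t / y) = (y - t) ^ k * (y + k * t) := by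
  rw [betaTwoSurvival, one_sub_div hy, div_pow, pow_succ]
  field_simp

lemma hasDerivAt_sub_pow_mul (k : ℕ) (t y : ℝ) :
    HasDerivAt (fun y => (y - t) ^ (k + 1) * (y + (k + 1) * t))
      ((k + 2) * ((y - t) ^ k * (y + k * t))) y := by
  have h := (((hasDerivAt_id' y).sub_const t).pow (k + 1)).mul
    ((hasDerivAt_id' y).add_const (((k : ℝ) + 1) * t))
  apply h.congr_deriv
  rw [Nat.add_sub_cancel, Pi.pow_apply, pow_succ]
  push_cast
  ring

lemma lintegral_Ioo_mul_betaTwoSurvival_div {k : ℕ} (hk : 1 ≤ k) (t : ℝ) :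
    ∫⁻ y in Ioo 0 1, ENNReal.ofReal
        ((k + 2) * y ^ (k + 1) * betaTwoSurvival k (projIcc 0 1 zero_le_one (t / y))) =
      ENNReal.ofReal (betaTwoSurvival (k + 1) (projIcc 0 1 zero_le_one t)) := by
  have hpow (y : ℝ) : HasDerivAt (fun y => y ^ (k + 2)) ((k + 2) * y ^ (k + 1)) y := by
    simpa using hasDerivAt_pow (k + 2) y
  rcases le_or_gt t 0 with ht0 | ht0
  · rw [projIcc_of_le_left _ ht0, betaTwoSurvival_zero,
      setLIntegral_congr_fun measurableSet_Ioo fun y hy => by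
        rw [projIcc_of_le_left _ (div_nonpos_of_nonpos_of_nonneg ht0 hy.1.le),
          betaTwoSurvival_zero, mul_one],
      lintegral_Ioo_ofReal_eq_sub zero_le_one hpow (by fun_prop)
        fun y hy => by have := hy.1; positivity]
    simp
  rcases le_or_gt 1 t with ht1 | ht1
  · rw [projIcc_of_right_le _ ht1, betaTwoSurvival_one (by omega),
      setLIntegral_congr_fun measurableSet_Ioo fun y hy => by
        rw [projIcc_of_right_le _ ((one_le_div hy.1).2 (hy.2.le.trans ht1)),
          betaTwoSurvival_one hk, mul_zero]]
    simp
  have hIoc : ∀ y ∈ Ioc 0 t, ENNReal.ofReal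
      ((k + 2) * y ^ (k + 1) * betaTwoSurvival k (projIcc 0 1 zero_le_one (t / y))) = 0 := by
    intro y hy
    rw [projIcc_of_right_le _ ((one_le_div hy.1).2 hy.2), betaTwoSurvival_one hk, mul_zero,
      ENNReal.ofReal_zero]
  have hIoo : ∀ y ∈ Ioo t 1, ENNReal.ofReal
      ((k + 2) * y ^ (k + 1) * betaTwoSurvival k (projIcc 0 1 zero_le_one (t / y))) =
      ENNReal.ofReal ((k + 2) * ((y - t) ^ k * (y + k * t))) := by
    intro y hy
    have hy0 : 0 < y := ht0.trans hy.1
    rw [projIcc_of_mem _ ⟨div_nonneg ht0.le hy0.le, (div_le_one hy0).2 hy.1.le⟩, mul_assoc,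
      pow_mul_betaTwoSurvival_div k t hy0.ne']
  rw [← Ioc_union_Ioo_eq_Ioo ht0.le ht1,
    lintegral_union measurableSet_Ioo (Ioc_disjoint_Ioi_same.mono_right Ioo_subset_Ioi_self),
    setLIntegral_congr_fun measurableSet_Ioc hIoc, setLIntegral_congr_fun measurableSet_Ioo hIoo,
    lintegral_zero, zero_add, lintegral_Ioo_ofReal_eq_sub ht1.le (hasDerivAt_sub_pow_mul k t)
      (by fun_prop) fun y hy => by
      have := ht0.trans hy.1
      exact mul_nonneg (by positivity)
        (mul_nonneg (pow_nonneg (sub_pos.2 hy.1).le _) (by positivity)),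
    projIcc_of_mem _ ⟨ht0.le, ht1.le⟩]
  simp [betaTwoSurvival]

lemma betaM_two_mconv_betaM {k : ℕ} (hk : 1 ≤ k) :
    betaM 2 k ∗ₘ betaM (k + 2) 1 = betaM 2 (k + 1) := by
  have hk0 : (0 : ℝ) < k := by exact_mod_cast hk
  have := isProbabilityMeasure_betaM two_pos hk0
  have := isProbabilityMeasure_betaM (by positivity : (0 : ℝ) < k + 2) one_pos
  have := isProbabilityMeasure_betaM two_pos (by positivity : (0 : ℝ) < k + 1)
  refine Measure.ext_of_Ioi _ _ fun t => ?_
  have hsec : ∀ y ∈ Ioo (0 : ℝ) 1,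
      (fun x => (x, y)) ⁻¹' ((fun p : ℝ × ℝ => p.1 * p.2) ⁻¹' Ioi t) = Ioi (t / y) := by
    intro y hy
    ext x
    exact (div_lt_iff₀ hy.1).symm
  rw [← Nat.cast_add_one, betaM_two_Ioi (by omega), Measure.mconv,
    Measure.map_apply measurable_mul measurableSet_Ioi,
    Measure.prod_apply_symm (measurable_mul measurableSet_Ioi), betaM_natCast_add_two_one,
    lintegral_unitIntervalWithDensity (by fun_prop),
    setLIntegral_congr_fun measurableSet_Ioo fun y hy => by
      rw [hsec y hy, betaM_two_Ioi hk, ← ENNReal.ofReal_mul (by have := hy.1; positivity)]]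
  exact lintegral_Ioo_mul_betaTwoSurvival_div hk t

lemma map_prod_Icc_eq_betaM {Ω : Type*} [MeasurableSpace Ω] {P : Measure Ω}
    [IsProbabilityMeasure P] {Y : ℕ → Ω → ℝ} (hind : iIndepFun Y P)
    (hmeas : ∀ j, AEMeasurable (Y j) P) {n : ℕ} (hn : 2 ≤ n)
    (hlaw : ∀ j ∈ Finset.Icc 2 n, P.map (Y j) = betaM j 1) :
    P.map (∏ j ∈ Finset.Icc 2 n, Y j) = betaM 2 (n - 1) := by
  induction n, hn using Nat.le_induction with
  | base =>
    rw [Finset.Icc_self, Finset.prod_singleton, hlaw 2 (by simp)]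
    norm_num
  | succ n hn ih =>
    obtain ⟨k, rfl⟩ := Nat.exists_eq_add_of_le' (by omega : 1 ≤ n)
    rw [Finset.prod_Icc_succ_top (by omega),
      (hind.indepFun_finsetProd_of_notMem₀ hmeas (by simp)).map_mul_eq_map_mconv_map₀
        (Finset.aemeasurable_prod _ fun j _ => hmeas j) (hmeas _),
      ih fun j hj => hlaw j (Finset.Icc_subset_Icc_right (by omega) hj),
      hlaw (k + 1 + 1) (Finset.right_mem_Icc.2 (by omega)),
      show ((k + 1 : ℕ) : ℝ) - 1 = k by push_cast; ring,
      show ((k + 1 + 1 : ℕ) : ℝ) = k + 2 by push_cast; ring,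
      show (k : ℝ) + 2 - 1 = k + 1 by ring]
    exact betaM_two_mconv_betaM (by omega)

/-- The product of independent Beta random variables `β_{j,1}`, `j = 2, …, N`,
is Beta distributed with parameters `(2, N-1)`. -/
theorem prod_beta_eq_beta {Ω : Type*} [MeasurableSpace Ω] (P : Measure Ω) [IsProbabilityMeasure P]
    (N : ℕ) (hN : 2 ≤ N) (X : ℕ → Ω → ℝ)
    (hindep : iIndepFun X P)
    (hX : ∀ j ∈ Finset.Icc 2 N, Measure.map (X j) P = betaM (j : ℝ) 1) :
    Measure.map (fun ω => ∏ j ∈ Finset.Icc 2 N, X j ω) P = betaM 2 ((N : ℝ) - 1) := by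
  -- Outside `Icc 2 N` the `X j` need not be a.e.-measurable; making them constant there keeps
  -- the family independent.
  set Y : ℕ → Ω → ℝ := fun j => (fun x => if j ∈ Finset.Icc 2 N then x else 1) ∘ X j
  have hYind : iIndepFun Y P := hindep.comp _ fun j => by split_ifs <;> fun_prop
  have hYX : ∀ j ∈ Finset.Icc 2 N, Y j = X j := fun j hj => by
    funext ω
    simp only [Y, Function.comp, if_pos hj]
  have hYmeas : ∀ j, AEMeasurable (Y j) P := by
    intro j
    by_cases hj : j ∈ Finset.Icc 2 N
    · have hj0 : (0 : ℝ) < j := Nat.cast_pos.2 (two_pos.trans_le (Finset.mem_Icc.1 hj).1)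
      rw [hYX j hj]
      refine AEMeasurable.of_map_ne_zero ?_
      rw [hX j hj]
      exact (isProbabilityMeasure_betaM hj0 one_pos).ne_zero
    · simp only [Y, hj, if_false]
      exact aemeasurable_const
  have h := map_prod_Icc_eq_betaM hYind hYmeas hN fun j hj => by rw [hYX j hj, hX j hj]
  rwa [Finset.prod_congr rfl hYX, Finset.prod_fn] at h
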